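/- arXiv:0712.0901 — 3 statements merged into one kernel-verified Lean document; each statement's English description precedes it below -/
import Mathlib

section
/- Lemma 4. Fix constants 0 < ε0 ≤ ε1, δ0 ≤ 1 ≤ M0 with δ0 ≤ M0/16. Assume: (B1) λ_min(Ṽ_i) ≥ 2δ0 and λ_max(Ṽ_i) ≤ M0/2 for all 1 ≤ i ≤ n, where Ṽ_i is the MoM covariance matrix computed at the true β; (B2) n(j,k,l)^{-1} Σ_{i∈I(j,k,l)} (1 + s_{ij}) |Y_{ik} − μ_{ik}| ≤ ε0^{-1/2} for all 1 ≤ l ≤ L_{jk}, (j,k) ∈ D; and (C1) b²(2ε0^{1/2} + L1²ε0²) ≤ δ0, where L1 = max_{i≤n, j∈J_i} s_{ij}. Then for any β̂ with |β̂ − β| ≤ ε0, the MoM covariance matrices V̂_i computed at β̂ satisfy λ_min(V̂_i) ≥ δ0 and λ_max(V̂_i) ≤ (9/16) M0 for all 1 ≤ i ≤ n. -/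
open Metric Finset
open scoped Matrix

/-!
Moving the parameter from `β` to `β̂` changes each residual `Y_{ij} − g_j(X_i,·)` by at most
`s_{ij} ε₀` (mean value theorem), so by (B2) every MoM entry moves by at most
`e = 2 ε₀^{1/2} + L₁² ε₀²`. An entrywise perturbation of size `e` of a symmetric `d × d` matrix
moves its quadratic form by at most `d e |x|²`, and `d e ≤ b² e ≤ δ₀` by (C1); this shifts the
Loewner bounds of (B1) by `δ₀`, and `M₀/2 + δ₀ ≤ 9M₀/16`.
-/

lemma abs_sub_le_of_norm_gradient_le {E : Type*} [NormedAddCommGroup E] [InnerProductSpace ℝ E]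
    [CompleteSpace E] {f : E → ℝ} {f' : E → E} {a x : E} {r ε C : ℝ}
    (hf : ∀ y ∈ closedBall a r, HasGradientAt f (f' y) y)
    (hC : ∀ y ∈ closedBall a r, ‖f' y‖ ≤ C) (hx : ‖x - a‖ ≤ ε) (hεr : ε ≤ r) :
    |f x - f a| ≤ C * ε := by
  have ha : a ∈ closedBall a r := mem_closedBall_self (((norm_nonneg _).trans hx).trans hεr)
  have hxr : x ∈ closedBall a r := by rw [mem_closedBall, dist_eq_norm]; exact hx.trans hεr
  have hmvt := (convex_closedBall a r).norm_image_sub_le_of_norm_hasFDerivWithin_le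
    (f' := fun y => InnerProductSpace.toDual ℝ E (f' y))
    (fun y hy => (hf y hy).hasFDerivAt.hasFDerivWithinAt)
    (fun y hy => by rw [LinearIsometryEquiv.norm_map]; exact hC y hy) ha hxr
  rw [Real.norm_eq_abs] at hmvt
  exact hmvt.trans (mul_le_mul_of_nonneg_left hx ((norm_nonneg _).trans (hC a ha)))

lemma abs_mul_sub_mul_le (a c a' c' : ℝ) :
    |a' * c' - a * c| ≤ |a| * |c' - c| + |c| * |a' - a| + |a' - a| * |c' - c| := by
  calc |a' * c' - a * c| = |a * (c' - c) + c * (a' - a) + (a' - a) * (c' - c)| := by ring_nf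
    _ ≤ |a * (c' - c)| + |c * (a' - a)| + |(a' - a) * (c' - c)| := abs_add_three _ _ _
    _ = |a| * |c' - c| + |c| * |a' - a| + |a' - a| * |c' - c| := by simp only [abs_mul]

section MomCovariance

variable {α ι ρ : Type*} (I : ρ → Finset ι) (jc kc : ρ → α)

/-- The estimate `v̂(j,k,l)` of the class `r = (j,k,l)`, with `I r = I(j,k,l)`, `jc r = j`,
`kc r = k`, computed from the residuals `Z i j = Y_{ij} − g_j(X_i, β̃)`. -/
noncomputable def momCovariance (Z : ι → α → ℝ) (r : ρ) : ℝ :=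
  (#(I r) : ℝ)⁻¹ * ∑ i ∈ I r, Z i (jc r) * Z i (kc r)

variable {I jc kc}

lemma abs_momCovariance_sub_le {Z Z' S : ι → α → ℝ} {ε L K : ℝ} {r : ρ} (hε : 0 ≤ ε)
    (hZ : ∀ i ∈ I r, ∀ j, |Z' i j - Z i j| ≤ S i j * ε) (hS : ∀ i ∈ I r, ∀ j, S i j ≤ L)
    (hKk : (#(I r) : ℝ)⁻¹ * ∑ i ∈ I r, (1 + S i (jc r)) * |Z i (kc r)| ≤ K)
    (hKj : (#(I r) : ℝ)⁻¹ * ∑ i ∈ I r, (1 + S i (kc r)) * |Z i (jc r)| ≤ K) :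
    |momCovariance I jc kc Z' r - momCovariance I jc kc Z r| ≤ 2 * ε * K + L ^ 2 * ε ^ 2 := by
  have hterm : ∀ i ∈ I r, |Z' i (jc r) * Z' i (kc r) - Z i (jc r) * Z i (kc r)|
      ≤ ε * ((1 + S i (kc r)) * |Z i (jc r)|) + ε * ((1 + S i (jc r)) * |Z i (kc r)|)
        + L ^ 2 * ε ^ 2 := by
    intro i hi
    have hj := hZ i hi (jc r)
    have hk := hZ i hi (kc r)
    have hj' := hj.trans (mul_le_mul_of_nonneg_right (hS i hi (jc r)) hε)
    have hk' := hk.trans (mul_le_mul_of_nonneg_right (hS i hi (kc r)) hε)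
    have hjk : |Z' i (jc r) - Z i (jc r)| * |Z' i (kc r) - Z i (kc r)| ≤ L ^ 2 * ε ^ 2 := by
      nlinarith [mul_le_mul hj' hk' (abs_nonneg _) ((abs_nonneg _).trans hj')]
    nlinarith [abs_mul_sub_mul_le (Z i (jc r)) (Z i (kc r)) (Z' i (jc r)) (Z' i (kc r)),
      mul_le_mul_of_nonneg_left hk (abs_nonneg (Z i (jc r))),
      mul_le_mul_of_nonneg_left hj (abs_nonneg (Z i (kc r))),
      mul_nonneg hε (abs_nonneg (Z i (jc r))), mul_nonneg hε (abs_nonneg (Z i (kc r)))]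
  have hinv : (0 : ℝ) ≤ (#(I r) : ℝ)⁻¹ := by positivity
  calc |momCovariance I jc kc Z' r - momCovariance I jc kc Z r|
      = (#(I r) : ℝ)⁻¹ * |∑ i ∈ I r, (Z' i (jc r) * Z' i (kc r) - Z i (jc r) * Z i (kc r))| := by
        rw [momCovariance, momCovariance, ← mul_sub, ← sum_sub_distrib, abs_mul,
          abs_of_nonneg hinv]
    _ ≤ (#(I r) : ℝ)⁻¹ * ∑ i ∈ I r, (ε * ((1 + S i (kc r)) * |Z i (jc r)|)
          + ε * ((1 + S i (jc r)) * |Z i (kc r)|) + L ^ 2 * ε ^ 2) :=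
        mul_le_mul_of_nonneg_left ((abs_sum_le_sum_abs _ _).trans (sum_le_sum hterm)) hinv
    _ = ε * ((#(I r) : ℝ)⁻¹ * ∑ i ∈ I r, (1 + S i (kc r)) * |Z i (jc r)|)
          + ε * ((#(I r) : ℝ)⁻¹ * ∑ i ∈ I r, (1 + S i (jc r)) * |Z i (kc r)|)
          + ((#(I r) : ℝ)⁻¹ * #(I r)) * (L ^ 2 * ε ^ 2) := by
        rw [sum_add_distrib, sum_add_distrib, sum_const, nsmul_eq_mul, ← mul_sum, ← mul_sum]
        ring
    _ ≤ ε * K + ε * K + 1 * (L ^ 2 * ε ^ 2) := by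
        gcongr
        exact inv_mul_le_one
    _ = 2 * ε * K + L ^ 2 * ε ^ 2 := by ring

lemma isHermitian_momCovariance {J : Finset α} {idx : α → α → ρ}
    (hidx : ∀ j ∈ J, ∀ k ∈ J, jc (idx j k) = j ∧ kc (idx j k) = k)
    (hI : ∀ j ∈ J, ∀ k ∈ J, I (idx k j) = I (idx j k)) (Z : ι → α → ℝ) :
    (Matrix.of fun j k : J => momCovariance I jc kc Z (idx j k)).IsHermitian := by
  ext j k
  obtain ⟨hjk, hkj⟩ := hidx j j.2 k k.2
  obtain ⟨hkj', hjk'⟩ := hidx k k.2 j j.2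
  simp only [Matrix.conjTranspose_apply, Matrix.of_apply, star_trivial, momCovariance,
    hI j j.2 k k.2, hjk, hkj, hjk', hkj', mul_comm]

end MomCovariance

namespace Matrix

lemma isHermitian_smul_one {m : Type*} [DecidableEq m] (c : ℝ) :
    (c • (1 : Matrix m m ℝ)).IsHermitian :=
  isHermitian_one.smul (IsSelfAdjoint.all c)

variable {m : Type*} [Fintype m]

lemma abs_dotProduct_mulVec_le_of_abs_apply_le {M : Matrix m m ℝ} {e : ℝ} (he : 0 ≤ e)
    (hM : ∀ j k, |M j k| ≤ e) (x : m → ℝ) :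
    |x ⬝ᵥ M *ᵥ x| ≤ Fintype.card m * e * (x ⬝ᵥ x) := by
  calc |x ⬝ᵥ M *ᵥ x| = |∑ j, ∑ k, x j * M j k * x k| := by
        simp only [dotProduct, mulVec, mul_sum, mul_assoc]
    _ ≤ ∑ j, ∑ k, |x j| * e * |x k| := by
        refine (abs_sum_le_sum_abs _ _).trans (sum_le_sum fun j _ => ?_)
        refine (abs_sum_le_sum_abs _ _).trans (sum_le_sum fun k _ => ?_)
        rw [abs_mul, abs_mul]
        gcongr
        exact hM j k
    _ = e * (∑ j, |x j|) ^ 2 := by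
        rw [sq, sum_mul_sum, mul_sum]
        exact sum_congr rfl fun j _ => by rw [mul_sum]; exact sum_congr rfl fun k _ => by ring
    _ ≤ e * (Fintype.card m * ∑ j, |x j| ^ 2) := by gcongr; exact sq_sum_le_card_mul_sum_sq
    _ = Fintype.card m * e * (x ⬝ᵥ x) := by
        simp only [sq_abs, dotProduct, ← sq]; ring

variable [DecidableEq m]

lemma dotProduct_sub_smul_one_mulVec (A : Matrix m m ℝ) (c : ℝ) (x : m → ℝ) :
    x ⬝ᵥ (A - c • 1) *ᵥ x = x ⬝ᵥ A *ᵥ x - c * (x ⬝ᵥ x) := by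
  simp only [sub_mulVec, smul_mulVec, one_mulVec, dotProduct_sub, dotProduct_smul, smul_eq_mul]

lemma dotProduct_smul_one_sub_mulVec (A : Matrix m m ℝ) (c : ℝ) (x : m → ℝ) :
    x ⬝ᵥ (c • 1 - A) *ᵥ x = c * (x ⬝ᵥ x) - x ⬝ᵥ A *ᵥ x := by
  simp only [sub_mulVec, smul_mulVec, one_mulVec, dotProduct_sub, dotProduct_smul, smul_eq_mul]

lemma PosSemidef.sub_smul_one_of_abs_sub_apply_le {A B : Matrix m m ℝ} {c d e : ℝ}
    (hB : (B - c • 1).PosSemidef) (hA : A.IsHermitian) (hAB : ∀ j k, |A j k - B j k| ≤ e)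
    (he : 0 ≤ e) (hd : d + Fintype.card m * e ≤ c) : (A - d • 1).PosSemidef := by
  refine .of_dotProduct_mulVec_nonneg (hA.sub (isHermitian_smul_one d)) fun x => ?_
  have hBx := hB.dotProduct_mulVec_nonneg x
  have hABx := abs_le.mp (abs_dotProduct_mulVec_le_of_abs_apply_le (M := A - B) he hAB x)
  have hxx : 0 ≤ x ⬝ᵥ x := dotProduct_self_star_nonneg x
  rw [star_trivial, dotProduct_sub_smul_one_mulVec] at hBx ⊢
  rw [sub_mulVec, dotProduct_sub] at hABx
  nlinarith [mul_le_mul_of_nonneg_right hd hxx]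

lemma PosSemidef.smul_one_sub_of_abs_sub_apply_le {A B : Matrix m m ℝ} {c d e : ℝ}
    (hB : (c • 1 - B).PosSemidef) (hA : A.IsHermitian) (hAB : ∀ j k, |A j k - B j k| ≤ e)
    (he : 0 ≤ e) (hd : c + Fintype.card m * e ≤ d) : (d • 1 - A).PosSemidef := by
  refine .of_dotProduct_mulVec_nonneg ((isHermitian_smul_one d).sub hA) fun x => ?_
  have hBx := hB.dotProduct_mulVec_nonneg x
  have hABx := abs_le.mp (abs_dotProduct_mulVec_le_of_abs_apply_le (M := A - B) he hAB x)
  have hxx : 0 ≤ x ⬝ᵥ x := dotProduct_self_star_nonneg x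
  rw [star_trivial, dotProduct_smul_one_sub_mulVec] at hBx ⊢
  rw [sub_mulVec, dotProduct_sub] at hABx
  nlinarith [mul_le_mul_of_nonneg_right hd hxx]

end Matrix

theorem mom_covariance_eigenvalue_stability_general
    {b p R n : ℕ}
    (J : ℕ → Finset (Fin b))
    (β : EuclideanSpace ℝ (Fin p))
    (ε₀ ε₁ δ₀ M₀ L₁ : ℝ)
    (hε₀₁ : ε₀ ≤ ε₁)
    (hδM : δ₀ ≤ M₀ / 16)
    -- data: responses and mean functions g j i = g_j(X_i, ·)
    (Y : ℕ → Fin b → ℝ)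
    (g : Fin b → ℕ → EuclideanSpace ℝ (Fin p) → ℝ)
    (G : Fin b → ℕ → EuclideanSpace ℝ (Fin p) → EuclideanSpace ℝ (Fin p))
    (s : ℕ → Fin b → ℝ)
    (hG : ∀ j i, ∀ x ∈ closedBall β ε₁, HasGradientAt (g j i) (G j i x) x)
    (hs : ∀ j i, ∀ x ∈ closedBall β ε₁, ‖G j i x‖ ≤ s i j)
    (hL₁ : ∀ i j, s i j ≤ L₁)
    -- Assumption A1: classes I(j,k,l), indexed by r ∈ Fin R, with coordinates (jc r, kc r)
    (Icl : Fin R → Finset ℕ) (jc kc : Fin R → Fin b)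
    (ridx : ℕ → Fin b → Fin b → Fin R)
    (hridx : ∀ i < n, ∀ j ∈ J i, ∀ k ∈ J i,
      i ∈ Icl (ridx i j k) ∧ jc (ridx i j k) = j ∧ kc (ridx i j k) = k)
    (hclsym : ∀ i < n, ∀ j ∈ J i, ∀ k ∈ J i, Icl (ridx i k j) = Icl (ridx i j k))
    -- (B2), in both coordinate orders (the set D of pairs is symmetric)
    (hB2 : ∀ r : Fin R,
      ((Icl r).card : ℝ)⁻¹ *
          ∑ i ∈ Icl r, (1 + s i (jc r)) * |Y i (kc r) - g (kc r) i β| ≤ (Real.sqrt ε₀)⁻¹ ∧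
      ((Icl r).card : ℝ)⁻¹ *
          ∑ i ∈ Icl r, (1 + s i (kc r)) * |Y i (jc r) - g (jc r) i β| ≤ (Real.sqrt ε₀)⁻¹)
    -- (C1)
    (hC1 : (b : ℝ) ^ 2 * (2 * Real.sqrt ε₀ + L₁ ^ 2 * ε₀ ^ 2) ≤ δ₀) :
    -- vh βt is the vector of MoM covariance estimators computed at the parameter value βt
    ∀ vh : EuclideanSpace ℝ (Fin p) → Fin R → ℝ,
      (vh = fun βt r => ((Icl r).card : ℝ)⁻¹ *
        ∑ i ∈ Icl r, (Y i (jc r) - g (jc r) i βt) * (Y i (kc r) - g (kc r) i βt)) →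
      -- (B1): 2δ₀ ≤ λ_min(Ṽ_i), λ_max(Ṽ_i) ≤ M₀/2, where Ṽ_i is computed at the true β
      (∀ i < n,
        ((Matrix.of fun j k : {x // x ∈ J i} => vh β (ridx i j.1 k.1)) -
            (2 * δ₀) • 1).PosSemidef ∧
        ((M₀ / 2) • (1 : Matrix {x // x ∈ J i} {x // x ∈ J i} ℝ) -
            Matrix.of fun j k : {x // x ∈ J i} => vh β (ridx i j.1 k.1)).PosSemidef) →
      -- conclusion: δ₀ ≤ λ_min(V̂_i), λ_max(V̂_i) ≤ (9/16)M₀, V̂_i computed at β̂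
      ∀ βh : EuclideanSpace ℝ (Fin p), ‖βh - β‖ ≤ ε₀ →
        ∀ i < n,
          ((Matrix.of fun j k : {x // x ∈ J i} => vh βh (ridx i j.1 k.1)) -
              δ₀ • 1).PosSemidef ∧
          ((9 / 16 * M₀) • (1 : Matrix {x // x ∈ J i} {x // x ∈ J i} ℝ) -
              Matrix.of fun j k : {x // x ∈ J i} => vh βh (ridx i j.1 k.1)).PosSemidef := by
  intro vh hvh hB1 βh hβh i hi
  subst hvh
  have hε₀ : 0 ≤ ε₀ := (norm_nonneg _).trans hβh
  set e := 2 * Real.sqrt ε₀ + L₁ ^ 2 * ε₀ ^ 2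
  have he0 : 0 ≤ e := by positivity
  have hincr : ∀ r, |momCovariance Icl jc kc (fun i j => Y i j - g j i βh) r
      - momCovariance Icl jc kc (fun i j => Y i j - g j i β) r| ≤ e := by
    intro r
    have := abs_momCovariance_sub_le hε₀ (fun i _ j => by
        rw [sub_sub_sub_cancel_left, abs_sub_comm]
        exact abs_sub_le_of_norm_gradient_le (hG j i) (hs j i) hβh hε₀₁)
      (fun i _ j => hL₁ i j) (hB2 r).1 (hB2 r).2
    rwa [mul_assoc, ← div_eq_mul_inv, Real.div_sqrt] at this
  have hcard : (Fintype.card (J i) : ℝ) * e ≤ δ₀ := by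
    have : Fintype.card (J i) ≤ b ^ 2 := by
      rw [Fintype.card_coe]
      exact (card_le_univ (J i)).trans (by simpa using Nat.le_self_pow two_ne_zero b)
    calc (Fintype.card (J i) : ℝ) * e ≤ b ^ 2 * e := by gcongr; exact_mod_cast this
      _ ≤ δ₀ := hC1
  have hV := isHermitian_momCovariance (fun j hj k hk => (hridx i hi j hj k hk).2)
    (hclsym i hi) (fun i j => Y i j - g j i βh)
  obtain ⟨hlo, hhi⟩ := hB1 i hi
  exact ⟨hlo.sub_smul_one_of_abs_sub_apply_le hV (fun j k => hincr _) he0 (by linarith),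
    hhi.smul_one_sub_of_abs_sub_apply_le hV (fun j k => hincr _) he0 (by linarith)⟩

theorem mom_covariance_eigenvalue_stability
    {b p R n : ℕ}
    (J : ℕ → Finset (Fin b))
    (β : EuclideanSpace ℝ (Fin p))
    (ε₀ ε₁ δ₀ M₀ L₁ : ℝ)
    (hε₀ : 0 < ε₀) (hε₀₁ : ε₀ ≤ ε₁)
    (hδ₀ : δ₀ ≤ 1) (hM₀ : 1 ≤ M₀) (hδM : δ₀ ≤ M₀ / 16) (hδpos : 0 < δ₀)
    -- data: responses and mean functions g j i = g_j(X_i, ·)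
    (Y : ℕ → Fin b → ℝ)
    (g : Fin b → ℕ → EuclideanSpace ℝ (Fin p) → ℝ)
    (G : Fin b → ℕ → EuclideanSpace ℝ (Fin p) → EuclideanSpace ℝ (Fin p))
    (s : ℕ → Fin b → ℝ)
    (hG : ∀ j i, ∀ x ∈ closedBall β ε₁, HasGradientAt (g j i) (G j i x) x)
    (hs : ∀ j i, ∀ x ∈ closedBall β ε₁, ‖G j i x‖ ≤ s i j)
    (hL₁ : ∀ i j, s i j ≤ L₁)
    -- Assumption A1: classes I(j,k,l), indexed by r ∈ Fin R, with coordinates (jc r, kc r)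
    (Icl : Fin R → Finset ℕ) (jc kc : Fin R → Fin b)
    (ridx : ℕ → Fin b → Fin b → Fin R)
    (hne : ∀ r, (Icl r).Nonempty)
    (hmem : ∀ r, ∀ i ∈ Icl r, jc r ∈ J i ∧ kc r ∈ J i)
    (hridx : ∀ i < n, ∀ j ∈ J i, ∀ k ∈ J i,
      i ∈ Icl (ridx i j k) ∧ jc (ridx i j k) = j ∧ kc (ridx i j k) = k)
    (hclsym : ∀ i < n, ∀ j ∈ J i, ∀ k ∈ J i, Icl (ridx i k j) = Icl (ridx i j k))
    -- (B2), in both coordinate orders (the set D of pairs is symmetric)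
    (hB2 : ∀ r : Fin R,
      ((Icl r).card : ℝ)⁻¹ *
          ∑ i ∈ Icl r, (1 + s i (jc r)) * |Y i (kc r) - g (kc r) i β| ≤ (Real.sqrt ε₀)⁻¹ ∧
      ((Icl r).card : ℝ)⁻¹ *
          ∑ i ∈ Icl r, (1 + s i (kc r)) * |Y i (jc r) - g (jc r) i β| ≤ (Real.sqrt ε₀)⁻¹)
    -- (C1)
    (hC1 : (b : ℝ) ^ 2 * (2 * Real.sqrt ε₀ + L₁ ^ 2 * ε₀ ^ 2) ≤ δ₀) :
    -- vh βt is the vector of MoM covariance estimators computed at the parameter value βt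
    ∀ vh : EuclideanSpace ℝ (Fin p) → Fin R → ℝ,
      (vh = fun βt r => ((Icl r).card : ℝ)⁻¹ *
        ∑ i ∈ Icl r, (Y i (jc r) - g (jc r) i βt) * (Y i (kc r) - g (kc r) i βt)) →
      -- (B1): 2δ₀ ≤ λ_min(Ṽ_i), λ_max(Ṽ_i) ≤ M₀/2, where Ṽ_i is computed at the true β
      (∀ i < n,
        ((Matrix.of fun j k : {x // x ∈ J i} => vh β (ridx i j.1 k.1)) -
            (2 * δ₀) • 1).PosSemidef ∧
        ((M₀ / 2) • (1 : Matrix {x // x ∈ J i} {x // x ∈ J i} ℝ) -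
            Matrix.of fun j k : {x // x ∈ J i} => vh β (ridx i j.1 k.1)).PosSemidef) →
      -- conclusion: δ₀ ≤ λ_min(V̂_i), λ_max(V̂_i) ≤ (9/16)M₀, V̂_i computed at β̂
      ∀ βh : EuclideanSpace ℝ (Fin p), ‖βh - β‖ ≤ ε₀ →
        ∀ i < n,
          ((Matrix.of fun j k : {x // x ∈ J i} => vh βh (ridx i j.1 k.1)) -
              δ₀ • 1).PosSemidef ∧
          ((9 / 16 * M₀) • (1 : Matrix {x // x ∈ J i} {x // x ∈ J i} ℝ) -
              Matrix.of fun j k : {x // x ∈ J i} => vh βh (ridx i j.1 k.1)).PosSemidef :=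
  mom_covariance_eigenvalue_stability_general J β ε₀ ε₁ δ₀ M₀ L₁ hε₀₁ hδM Y g G s hG hs hL₁ Icl jc
    kc ridx hridx hclsym hB2 hC1
end

section
/- Lemma 6. Fix constants 0 < ε0 ≤ ε1 and η > 0. Assume: (B2) n(j,k,l)^{-1} Σ_{i∈I(j,k,l)} (1 + s_{ij}) |Y_{ik} − μ_{ik}| ≤ ε0^{-1/2} for all q, l, (j,k); (B3) sup_{v∈𝒱} ‖∂β/∂v‖ ≤ ε0^{-1/4}; (B5) n(j,k,l)^{-1} | Σ_{i∈I(j,k,l)} (∂μ_{ij}/∂β_q)(Y_{ik} − μ_{ik}) | ≤ ε0^{1/2} for all 1 ≤ q ≤ p, 1 ≤ l ≤ L_{jk}, (j,k) ∈ D; and (C2) √(R(R ∨ p)) [ L1² ε0^{3/4} + (L2 + 1) ε0^{1/4} ] ≤ η/2. Then for any β̂ with |β̂ − β| ≤ ε0 and any v̂ ∈ 𝒱: | (∂τ/∂β_q)|_{β=β̂} | ≤ η for all 1 ≤ q ≤ p, and | (∂ρ/∂v_r)|_{v=v̂} | ≤ η for all 1 ≤ r ≤ R, where τ = β ∘ v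 and ρ = v ∘ β. -/
open Metric Finset Matrix

noncomputable section

/-- the working covariance matrix `V_i` built from a covariance vector `v` via the class
assignment `ridx` of Assumption A1 -/
def workingCov {b R : ℕ} (J : ℕ → Finset (Fin b)) (ridx : ℕ → Fin b → Fin b → Fin R)
    (v : EuclideanSpace ℝ (Fin R)) (i : ℕ) :
    Matrix {j // j ∈ J i} {j // j ∈ J i} ℝ :=
  Matrix.of fun j k => v (ridx i j.1 k.1)

/-- membership in the set `𝒱 = {v : δ₀ ≤ λ_min(V_i), λ_max(V_i) ≤ M₀, i ≤ n}` -/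
def inVset {b R : ℕ} (J : ℕ → Finset (Fin b)) (ridx : ℕ → Fin b → Fin b → Fin R)
    (n : ℕ) (δ₀ M₀ : ℝ) (v : EuclideanSpace ℝ (Fin R)) : Prop :=
  ∀ i < n, ((workingCov J ridx v i) - δ₀ • 1).PosSemidef ∧
    (M₀ • (1 : Matrix {j // j ∈ J i} {j // j ∈ J i} ℝ) - workingCov J ridx v i).PosSemidef

/-- the method of moments map `β̃ ↦ v(β̃)` of (3.2), with components
`v̂(j,k,l) = n(j,k,l)⁻¹ Σ_{i∈I(j,k,l)} (Y_{ij} − g_j(X_i,β̃))(Y_{ik} − g_k(X_i,β̃))` -/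
def momMap {b p R : ℕ} (Y : ℕ → Fin b → ℝ) (g : Fin b → ℕ → EuclideanSpace ℝ (Fin p) → ℝ)
    (Icl : Fin R → Finset ℕ) (jc kc : Fin R → Fin b)
    (βt : EuclideanSpace ℝ (Fin p)) : EuclideanSpace ℝ (Fin R) :=
  WithLp.toLp 2 fun r => ((Icl r).card : ℝ)⁻¹ *
    ∑ i ∈ Icl r, (Y i (jc r) - g (jc r) i βt) * (Y i (kc r) - g (kc r) i βt)

/-!
By the chain rule both partial derivatives are bounded by `‖∂β/∂v‖ · ‖∂v/∂β‖`, and (B3) bounds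
the first factor by `ε₀^{-1/4}`. Each coordinate of `∂v/∂β` at `β̂` is an average of products of
residuals with gradients of the mean. Re-centring it at the true `β` leaves a score term,
controlled coordinatewise by (B5); a term in which the gradient moves by `L₂ ε₀` against
residuals of average size `ε₀^{-1/2}` (B2); and a term in which the mean moves by `L₁ ε₀`
against a gradient of size `L₁`. Hence `‖∂v/∂β‖ ≤ 2√R (√p ε₀^{1/2} + L₂ ε₀^{1/2} + L₁² ε₀)`,
and by (C2) `ε₀^{-1/4}` times this is at most `η`.
-/

open scoped RealInnerProductSpace

section EuclideanSpace

variable {ι : Type*} [Fintype ι]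

theorem EuclideanSpace.norm_le_sqrt_card_mul {w : EuclideanSpace ℝ ι} {M : ℝ} (hM : 0 ≤ M)
    (h : ∀ i, |w i| ≤ M) : ‖w‖ ≤ √(Fintype.card ι) * M := by
  rw [EuclideanSpace.norm_eq, ← Real.sqrt_sq hM, ← Real.sqrt_mul (Nat.cast_nonneg _)]
  gcongr
  calc ∑ i, ‖w i‖ ^ 2 ≤ ∑ _i : ι, M ^ 2 := by
        gcongr with i
        exact (Real.norm_eq_abs _).trans_le (h i)
    _ = Fintype.card ι * M ^ 2 := by simp

theorem EuclideanSpace.norm_single_one_comp_apply_le {F G : Type*} [DecidableEq ι]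
    [NormedAddCommGroup F] [NormedSpace ℝ F] [NormedAddCommGroup G] [NormedSpace ℝ G]
    (A : F →L[ℝ] G) (B : EuclideanSpace ℝ ι →L[ℝ] F) (i : ι) :
    ‖(A.comp B) (EuclideanSpace.single i 1)‖ ≤ ‖A‖ * ‖B‖ :=
  ((A.comp B).le_opNorm _).trans <| by
    rw [PiLp.norm_single, norm_one, mul_one]
    exact A.opNorm_comp_le B

variable {E : Type*} [NormedAddCommGroup E] [InnerProductSpace ℝ E] [CompleteSpace E]
  {f : E → EuclideanSpace ℝ ι} {f' : ι → E} {x : E}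

theorem EuclideanSpace.differentiableAt_of_hasGradientAt_apply
    (h : ∀ i, HasGradientAt (fun x => f x i) (f' i) x) : DifferentiableAt ℝ f x :=
  differentiableAt_euclidean.2 fun i => (h i).differentiableAt

theorem EuclideanSpace.fderiv_apply_of_hasGradientAt_apply
    (h : ∀ i, HasGradientAt (fun x => f x i) (f' i) x) (u : E) (i : ι) :
    fderiv ℝ f x u i = ⟪f' i, u⟫ := by
  have hi := hasFDerivWithinAt_euclidean.1
    ((differentiableAt_of_hasGradientAt_apply h).hasFDerivAt.hasFDerivWithinAt (s := Set.univ)) i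
  rw [hasFDerivWithinAt_univ] at hi
  rw [← (h i).fderiv_apply, hi.fderiv]
  rfl

end EuclideanSpace

section Average

variable {α : Type*} (I : Finset α)

theorem inv_card_mul_sum_le {f : α → ℝ} {M : ℝ} (hM : 0 ≤ M) (h : ∀ i ∈ I, f i ≤ M) :
    (#I : ℝ)⁻¹ * ∑ i ∈ I, f i ≤ M := by
  rcases I.eq_empty_or_nonempty with rfl | hI
  · simpa using hM
  · rw [inv_mul_le_iff₀ (by exact_mod_cast hI.card_pos), ← nsmul_eq_mul]
    exact sum_le_card_nsmul I f M h

theorem inv_card_mul_sum_abs_le_of_one_add_mul_le {s a : α → ℝ} {M : ℝ} (hs : ∀ i ∈ I, 0 ≤ s i)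
    (h : (#I : ℝ)⁻¹ * ∑ i ∈ I, (1 + s i) * |a i| ≤ M) : (#I : ℝ)⁻¹ * ∑ i ∈ I, |a i| ≤ M :=
  h.trans' <| by
    gcongr with i hi
    exact le_mul_of_one_le_left (abs_nonneg _) (le_add_of_nonneg_right (hs i hi))

theorem abs_inv_card_mul_sum_mul_le {a b : α → ℝ} {B : ℝ} (h : ∀ i ∈ I, |b i| ≤ B) :
    |(#I : ℝ)⁻¹ * ∑ i ∈ I, a i * b i| ≤ ((#I : ℝ)⁻¹ * ∑ i ∈ I, |a i|) * B := by
  rw [abs_mul, abs_inv, Nat.abs_cast, mul_assoc, sum_mul]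
  gcongr
  refine (abs_sum_le_sum_abs _ _).trans (sum_le_sum fun i hi => ?_)
  rw [abs_mul]
  exact mul_le_mul_of_nonneg_left (h i hi) (abs_nonneg _)

variable {E : Type*} [NormedAddCommGroup E] [InnerProductSpace ℝ E] [CompleteSpace E]

theorem hasGradientAt_inv_card_mul_sum_residual_mul {y z : α → ℝ} {f h : α → E → ℝ}
    {F H : α → E} {x : E} (hf : ∀ i, HasGradientAt (f i) (F i) x)
    (hh : ∀ i, HasGradientAt (h i) (H i) x) :
    HasGradientAt (fun x => (#I : ℝ)⁻¹ * ∑ i ∈ I, (y i - f i x) * (z i - h i x))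
      ((#I : ℝ)⁻¹ • ∑ i ∈ I, ((y i - f i x) • -H i + (z i - h i x) • -F i)) x := by
  rw [hasGradientAt_iff_hasFDerivAt]
  refine ((HasFDerivAt.fun_sum (u := I) fun i _ => ((hf i).hasFDerivAt.const_sub (y i)).mul
    ((hh i).hasFDerivAt.const_sub (z i))).const_mul (#I : ℝ)⁻¹).congr_fderiv ?_
  simp only [map_smul, map_sum, map_add, map_neg]

end Average

section MeanValue

variable {E F : Type*} [NormedAddCommGroup E] [NormedSpace ℝ E] [NormedAddCommGroup F]
  [NormedSpace ℝ F] {x₀ x : E} {ε ε' C : ℝ}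

theorem norm_sub_le_of_hasFDerivAt_of_mem_closedBall {f : E → F} {f' : E → E →L[ℝ] F}
    (hf : ∀ y, HasFDerivAt f (f' y) y) (hbound : ∀ y ∈ closedBall x₀ ε', ‖f' y‖ ≤ C)
    (hC : 0 ≤ C) (hεε' : ε ≤ ε') (hx : ‖x - x₀‖ ≤ ε) : ‖f x - f x₀‖ ≤ C * ε := by
  have hx₀ : x₀ ∈ closedBall x₀ ε' := mem_closedBall_self ((norm_nonneg _).trans (hx.trans hεε'))
  have hx' : x ∈ closedBall x₀ ε' := mem_closedBall_iff_norm.2 (hx.trans hεε')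
  calc ‖f x - f x₀‖ ≤ C * ‖x - x₀‖ :=
        (convex_closedBall x₀ ε').norm_image_sub_le_of_norm_hasFDerivWithin_le
          (fun y _ => (hf y).hasFDerivWithinAt) hbound hx₀ hx'
    _ ≤ C * ε := by gcongr

theorem abs_sub_le_of_hasGradientAt_of_mem_closedBall {E : Type*} [NormedAddCommGroup E]
    [InnerProductSpace ℝ E] [CompleteSpace E] {x₀ x : E} {f : E → ℝ} {f' : E → E}
    (hf : ∀ y, HasGradientAt f (f' y) y) (hbound : ∀ y ∈ closedBall x₀ ε', ‖f' y‖ ≤ C)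
    (hC : 0 ≤ C) (hεε' : ε ≤ ε') (hx : ‖x - x₀‖ ≤ ε) : |f x - f x₀| ≤ C * ε :=
  norm_sub_le_of_hasFDerivAt_of_mem_closedBall (fun y => (hf y).hasFDerivAt)
    (fun y hy => by rw [LinearIsometryEquiv.norm_map]; exact hbound y hy) hC hεε' hx

end MeanValue

section Recentring

variable {α ι : Type*} [Fintype ι] (I : Finset α)

theorem abs_inv_card_mul_sum_mul_inner_le {a : α → ℝ} {w : α → EuclideanSpace ℝ ι} {M : ℝ}
    (hM : 0 ≤ M) (h : ∀ q, |(#I : ℝ)⁻¹ * ∑ i ∈ I, w i q * a i| ≤ M) (u : EuclideanSpace ℝ ι) :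
    |(#I : ℝ)⁻¹ * ∑ i ∈ I, a i * ⟪w i, u⟫| ≤ √(Fintype.card ι) * M * ‖u‖ := by
  set z : EuclideanSpace ℝ ι := (#I : ℝ)⁻¹ • ∑ i ∈ I, a i • w i
  have hz : ∀ q, |z q| ≤ M := fun q => by simpa [z, mul_comm] using h q
  calc |(#I : ℝ)⁻¹ * ∑ i ∈ I, a i * ⟪w i, u⟫| = |⟪z, u⟫| := by
        simp [z, real_inner_smul_left, sum_inner]
    _ ≤ ‖z‖ * ‖u‖ := abs_real_inner_le_norm z u
    _ ≤ √(Fintype.card ι) * M * ‖u‖ := by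
        gcongr
        exact EuclideanSpace.norm_le_sqrt_card_mul hM hz

variable {y : α → ℝ} {f : α → EuclideanSpace ℝ ι → ℝ}
  {φ : α → EuclideanSpace ℝ ι → EuclideanSpace ℝ ι} {x₀ x : EuclideanSpace ℝ ι} {ε L₁ L₂ : ℝ}

theorem abs_inv_card_mul_sum_residual_mul_inner_le (hε : 0 ≤ ε) (hL₁ : 0 ≤ L₁) (hL₂ : 0 ≤ L₂)
    (hres : (#I : ℝ)⁻¹ * ∑ i ∈ I, |y i - f i x₀| ≤ (√ε)⁻¹)
    (hscore : ∀ q, |(#I : ℝ)⁻¹ * ∑ i ∈ I, φ i x₀ q * (y i - f i x₀)| ≤ √ε)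
    (hf : ∀ i, |f i x - f i x₀| ≤ L₁ * ε) (hφ : ∀ i, ‖φ i x - φ i x₀‖ ≤ L₂ * ε)
    (hφx : ∀ i, ‖φ i x‖ ≤ L₁) (u : EuclideanSpace ℝ ι) :
    |(#I : ℝ)⁻¹ * ∑ i ∈ I, (y i - f i x) * ⟪φ i x, u⟫| ≤
      (√(Fintype.card ι) * √ε + L₂ * √ε + L₁ ^ 2 * ε) * ‖u‖ := by
  set c : ℝ := (#I : ℝ)⁻¹
  have hsplit : c * ∑ i ∈ I, (y i - f i x) * ⟪φ i x, u⟫ =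
      c * ∑ i ∈ I, (y i - f i x₀) * ⟪φ i x₀, u⟫ +
      c * ∑ i ∈ I, (y i - f i x₀) * ⟪φ i x - φ i x₀, u⟫ -
      c * ∑ i ∈ I, (f i x - f i x₀) * ⟪φ i x, u⟫ := by
    simp only [← mul_add, ← mul_sub, ← sum_add_distrib, ← sum_sub_distrib, inner_sub_left]
    congr 1
    exact sum_congr rfl fun i _ => by ring
  have hscore_term := abs_inv_card_mul_sum_mul_inner_le I (Real.sqrt_nonneg ε) hscore u
  have hφ_term : |c * ∑ i ∈ I, (y i - f i x₀) * ⟪φ i x - φ i x₀, u⟫| ≤ L₂ * √ε * ‖u‖ :=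
    calc _ ≤ (c * ∑ i ∈ I, |y i - f i x₀|) * (L₂ * ε * ‖u‖) :=
          abs_inv_card_mul_sum_mul_le I fun i _ =>
            (abs_real_inner_le_norm _ _).trans (by gcongr; exact hφ i)
      _ ≤ (√ε)⁻¹ * (L₂ * ε * ‖u‖) := by gcongr
      _ = L₂ * (ε / √ε) * ‖u‖ := by ring
      _ = L₂ * √ε * ‖u‖ := by rw [Real.div_sqrt]
  have hf_term : |c * ∑ i ∈ I, (f i x - f i x₀) * ⟪φ i x, u⟫| ≤ L₁ ^ 2 * ε * ‖u‖ :=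
    calc _ ≤ (c * ∑ i ∈ I, |f i x - f i x₀|) * (L₁ * ‖u‖) :=
          abs_inv_card_mul_sum_mul_le I fun i _ =>
            (abs_real_inner_le_norm _ _).trans (by gcongr; exact hφx i)
      _ ≤ (L₁ * ε) * (L₁ * ‖u‖) := by
          gcongr ?_ * _
          exact inv_card_mul_sum_le I (by positivity) fun i _ => hf i
      _ = L₁ ^ 2 * ε * ‖u‖ := by ring
  rw [hsplit]
  calc _ ≤ |c * ∑ i ∈ I, (y i - f i x₀) * ⟪φ i x₀, u⟫| +
        |c * ∑ i ∈ I, (y i - f i x₀) * ⟪φ i x - φ i x₀, u⟫| +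
        |c * ∑ i ∈ I, (f i x - f i x₀) * ⟪φ i x, u⟫| :=
        (abs_sub _ _).trans (by gcongr; exact abs_add_le _ _)
    _ ≤ _ := by linarith

end Recentring

section MomentMap

variable {b p R : ℕ} {Y : ℕ → Fin b → ℝ} {g : Fin b → ℕ → EuclideanSpace ℝ (Fin p) → ℝ}
  {G : Fin b → ℕ → EuclideanSpace ℝ (Fin p) → EuclideanSpace ℝ (Fin p)}
  {Icl : Fin R → Finset ℕ} {jc kc : Fin R → Fin b}

theorem momMap_apply_hasGradientAt (hG : ∀ j i y, HasGradientAt (g j i) (G j i y) y)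
    (x : EuclideanSpace ℝ (Fin p)) (r : Fin R) :
    HasGradientAt (fun x => momMap Y g Icl jc kc x r)
      ((#(Icl r) : ℝ)⁻¹ • ∑ i ∈ Icl r, ((Y i (jc r) - g (jc r) i x) • -G (kc r) i x +
        (Y i (kc r) - g (kc r) i x) • -G (jc r) i x)) x :=
  hasGradientAt_inv_card_mul_sum_residual_mul (Icl r) (fun i => hG _ i x) (fun i => hG _ i x)

theorem differentiable_momMap (hG : ∀ j i y, HasGradientAt (g j i) (G j i y) y) :
    Differentiable ℝ (momMap Y g Icl jc kc) := fun x =>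
  EuclideanSpace.differentiableAt_of_hasGradientAt_apply (momMap_apply_hasGradientAt hG x)

variable {H : Fin b → ℕ → EuclideanSpace ℝ (Fin p) →
    (EuclideanSpace ℝ (Fin p) →L[ℝ] EuclideanSpace ℝ (Fin p))}
  {β x : EuclideanSpace ℝ (Fin p)} {ε₀ ε₁ L₁ L₂ : ℝ}

theorem norm_fderiv_momMap_le (hG : ∀ j i y, HasGradientAt (g j i) (G j i y) y)
    (hH : ∀ j i y, HasFDerivAt (G j i) (H j i y) y)
    (hGL₁ : ∀ i j, ∀ y ∈ closedBall β ε₁, ‖G j i y‖ ≤ L₁)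
    (hHL₂ : ∀ i j, ∀ y ∈ closedBall β ε₁, ‖H j i y‖ ≤ L₂)
    (hε₀ : 0 ≤ ε₀) (hε₀₁ : ε₀ ≤ ε₁) (hL₁ : 0 ≤ L₁) (hL₂ : 0 ≤ L₂)
    (hres : ∀ r : Fin R,
      (#(Icl r) : ℝ)⁻¹ * ∑ i ∈ Icl r, |Y i (kc r) - g (kc r) i β| ≤ (√ε₀)⁻¹ ∧
      (#(Icl r) : ℝ)⁻¹ * ∑ i ∈ Icl r, |Y i (jc r) - g (jc r) i β| ≤ (√ε₀)⁻¹)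
    (hscore : ∀ (r : Fin R) (q : Fin p),
      |(#(Icl r) : ℝ)⁻¹ * ∑ i ∈ Icl r, G (jc r) i β q * (Y i (kc r) - g (kc r) i β)| ≤ √ε₀ ∧
      |(#(Icl r) : ℝ)⁻¹ * ∑ i ∈ Icl r, G (kc r) i β q * (Y i (jc r) - g (jc r) i β)| ≤ √ε₀)
    (hx : ‖x - β‖ ≤ ε₀) :
    ‖fderiv ℝ (momMap Y g Icl jc kc) x‖ ≤ √R * (2 * (√p * √ε₀ + L₂ * √ε₀ + L₁ ^ 2 * ε₀)) := by
  refine ContinuousLinearMap.opNorm_le_bound _ (by positivity) fun u => ?_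
  have half : ∀ (I : Finset ℕ) (j k : Fin b),
      (#I : ℝ)⁻¹ * ∑ i ∈ I, |Y i j - g j i β| ≤ (√ε₀)⁻¹ →
      (∀ q, |(#I : ℝ)⁻¹ * ∑ i ∈ I, G k i β q * (Y i j - g j i β)| ≤ √ε₀) →
      |(#I : ℝ)⁻¹ * ∑ i ∈ I, (Y i j - g j i x) * ⟪G k i x, u⟫| ≤
        (√p * √ε₀ + L₂ * √ε₀ + L₁ ^ 2 * ε₀) * ‖u‖ := fun I j k hres hscore => by
    simpa using abs_inv_card_mul_sum_residual_mul_inner_le I hε₀ hL₁ hL₂ hres hscore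
      (fun i => abs_sub_le_of_hasGradientAt_of_mem_closedBall (hG j i) (hGL₁ i j) hL₁ hε₀₁ hx)
      (fun i => norm_sub_le_of_hasFDerivAt_of_mem_closedBall (hH k i) (hHL₂ i k) hL₂ hε₀₁ hx)
      (fun i => hGL₁ i k x (mem_closedBall_iff_norm.2 (hx.trans hε₀₁))) u
  have hcoord : ∀ r, |fderiv ℝ (momMap Y g Icl jc kc) x u r| ≤
      2 * (√p * √ε₀ + L₂ * √ε₀ + L₁ ^ 2 * ε₀) * ‖u‖ := fun r => by
    rw [EuclideanSpace.fderiv_apply_of_hasGradientAt_apply (momMap_apply_hasGradientAt hG x)]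
    simp only [real_inner_smul_left, sum_inner, inner_add_left, inner_neg_left, mul_neg,
      sum_add_distrib, sum_neg_distrib, mul_add]
    calc _ ≤ |(#(Icl r) : ℝ)⁻¹ * ∑ i ∈ Icl r, (Y i (jc r) - g (jc r) i x) * ⟪G (kc r) i x, u⟫| +
          |(#(Icl r) : ℝ)⁻¹ * ∑ i ∈ Icl r, (Y i (kc r) - g (kc r) i x) * ⟪G (jc r) i x, u⟫| :=
          (abs_add_le _ _).trans_eq (by rw [abs_neg, abs_neg])
      _ ≤ _ := add_le_add (half _ _ _ (hres r).2 fun q => (hscore r q).2)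
          (half _ _ _ (hres r).1 fun q => (hscore r q).1)
      _ = _ := by ring
  simpa [mul_assoc] using EuclideanSpace.norm_le_sqrt_card_mul (by positivity) hcoord

end MomentMap

theorem inv_rpow_quarter_mul_le {R p : ℕ} {ε L₁ L₂ η : ℝ} (hε : 0 < ε) (hL₂ : 0 ≤ L₂)
    (hC2 : √((R : ℝ) * (max R p : ℕ)) *
      (L₁ ^ 2 * ε ^ ((3 : ℝ) / 4) + (L₂ + 1) * ε ^ ((1 : ℝ) / 4)) ≤ η / 2) :
    (ε ^ ((1 : ℝ) / 4))⁻¹ * (√R * (2 * (√p * √ε + L₂ * √ε + L₁ ^ 2 * ε))) ≤ η := by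
  set a := ε ^ ((1 : ℝ) / 4)
  have ha : 0 < a := by positivity
  have hpow : ∀ k : ℕ, ε ^ ((k : ℝ) / 4) = a ^ k := fun k => by
    rw [← Real.rpow_natCast, ← Real.rpow_mul hε.le]; ring_nf
  have h2 : √ε = a ^ 2 := by rw [Real.sqrt_eq_rpow, ← hpow 2]; norm_num
  have h3 : ε ^ ((3 : ℝ) / 4) = a ^ 3 := by rw [← hpow 3]; norm_num
  have h4 : ε = a ^ 4 := by rw [← hpow 4]; norm_num
  set M := √((R : ℝ) * (max R p : ℕ))
  have hRp : √R * √p ≤ M := by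
    rw [← Real.sqrt_mul (Nat.cast_nonneg _)]
    refine Real.sqrt_le_sqrt ?_
    exact_mod_cast Nat.mul_le_mul_left R (le_max_right R p)
  have hR : √R ≤ M := by
    refine Real.sqrt_le_sqrt ?_
    exact_mod_cast (Nat.le_mul_self R).trans (Nat.mul_le_mul_left R (le_max_left R p))
  rw [h3] at hC2
  rw [h2, h4]
  calc a⁻¹ * (√R * (2 * (√p * a ^ 2 + L₂ * a ^ 2 + L₁ ^ 2 * a ^ 4)))
      = 2 * (√R * √p * a + √R * (L₂ * a) + √R * (L₁ ^ 2 * a ^ 3)) := by field_simp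
    _ ≤ 2 * (M * a + M * (L₂ * a) + M * (L₁ ^ 2 * a ^ 3)) := by gcongr
    _ = 2 * (M * (L₁ ^ 2 * a ^ 3 + (L₂ + 1) * a)) := by ring
    _ ≤ η := by linarith

theorem composed_iteration_maps_derivative_bound_general
    {b p R n : ℕ} (J : ℕ → Finset (Fin b))
    (β : EuclideanSpace ℝ (Fin p))
    (ε₀ ε₁ δ₀ M₀ L₁ L₂ η : ℝ)
    (hε₀ : 0 < ε₀) (hε₀₁ : ε₀ ≤ ε₁) (hη : 0 < η)
    -- data: responses and mean functions g j i = g_j(X_i, ·), with their first two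
    -- derivatives G, H and the bounds s, L₁, L₂ of Assumption A2
    (Y : ℕ → Fin b → ℝ)
    (g : Fin b → ℕ → EuclideanSpace ℝ (Fin p) → ℝ)
    (G : Fin b → ℕ → EuclideanSpace ℝ (Fin p) → EuclideanSpace ℝ (Fin p))
    (H : Fin b → ℕ → EuclideanSpace ℝ (Fin p) →
      (EuclideanSpace ℝ (Fin p) →L[ℝ] EuclideanSpace ℝ (Fin p)))
    (s : ℕ → Fin b → ℝ)
    (hG : ∀ j i y, HasGradientAt (g j i) (G j i y) y)
    (hH : ∀ j i y, HasFDerivAt (G j i) (H j i y) y)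
    (hs : ∀ i j, ∀ x ∈ closedBall β ε₁, ‖G j i x‖ ≤ s i j)
    (hsL₁ : ∀ i j, s i j ≤ L₁)
    (hL₂ : ∀ i j, ∀ x ∈ closedBall β ε₁, ‖H j i x‖ ≤ L₂)
    -- Assumption A1: classes I(j,k,l) indexed by r, with coordinates (jc r, kc r)
    (Icl : Fin R → Finset ℕ) (jc kc : Fin R → Fin b)
    (ridx : ℕ → Fin b → Fin b → Fin R)
    -- the GEE-solution map β(·) with its derivative D (Assumption A4)
    (βmap : EuclideanSpace ℝ (Fin R) → EuclideanSpace ℝ (Fin p))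
    (D : EuclideanSpace ℝ (Fin R) →
      (EuclideanSpace ℝ (Fin R) →L[ℝ] EuclideanSpace ℝ (Fin p)))
    (hD : ∀ v, HasFDerivAt βmap (D v) v)
    -- (B2), in both coordinate orders
    (hB2 : ∀ r : Fin R,
      ((Icl r).card : ℝ)⁻¹ *
          ∑ i ∈ Icl r, (1 + s i (jc r)) * |Y i (kc r) - g (kc r) i β| ≤ (Real.sqrt ε₀)⁻¹ ∧
      ((Icl r).card : ℝ)⁻¹ *
          ∑ i ∈ Icl r, (1 + s i (kc r)) * |Y i (jc r) - g (jc r) i β| ≤ (Real.sqrt ε₀)⁻¹)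
    -- (B3): sup_{v∈𝒱} ‖∂β/∂v‖ ≤ ε₀^{-1/4}
    (hB3 : ∀ v, inVset J ridx n δ₀ M₀ v → ‖D v‖ ≤ (ε₀ ^ ((1 : ℝ) / 4))⁻¹)
    -- (B5), in both coordinate orders
    (hB5 : ∀ (r : Fin R) (q : Fin p),
      |((Icl r).card : ℝ)⁻¹ *
          ∑ i ∈ Icl r, (G (jc r) i β) q * (Y i (kc r) - g (kc r) i β)| ≤ Real.sqrt ε₀ ∧
      |((Icl r).card : ℝ)⁻¹ *
          ∑ i ∈ Icl r, (G (kc r) i β) q * (Y i (jc r) - g (jc r) i β)| ≤ Real.sqrt ε₀)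
    -- (C2)
    (hC2 : Real.sqrt ((R : ℝ) * (max R p : ℕ)) *
      (L₁ ^ 2 * ε₀ ^ ((3 : ℝ) / 4) + (L₂ + 1) * ε₀ ^ ((1 : ℝ) / 4)) ≤ η / 2) :
    -- |(∂τ/∂β_q)|_{β=β̂}| ≤ η whenever |β̂ − β| ≤ ε₀ (with v̂ = v(β̂) ∈ 𝒱)
    (∀ βh : EuclideanSpace ℝ (Fin p), ‖βh - β‖ ≤ ε₀ →
      inVset J ridx n δ₀ M₀ (momMap Y g Icl jc kc βh) →
      ∀ q : Fin p,
        ‖fderiv ℝ (fun x => βmap (momMap Y g Icl jc kc x)) βh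
          (EuclideanSpace.single q 1)‖ ≤ η) ∧
    -- |(∂ρ/∂v_r)|_{v=v̂}| ≤ η whenever v̂ ∈ 𝒱 (with β̂ = β(v̂) satisfying |β̂ − β| ≤ ε₀)
    (∀ vh : EuclideanSpace ℝ (Fin R), inVset J ridx n δ₀ M₀ vh →
      ‖βmap vh - β‖ ≤ ε₀ →
      ∀ r : Fin R,
        ‖fderiv ℝ (fun v => momMap Y g Icl jc kc (βmap v)) vh
          (EuclideanSpace.single r 1)‖ ≤ η) := by
  have hβball : β ∈ closedBall β ε₁ := mem_closedBall_self (hε₀.le.trans hε₀₁)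
  rcases R.eq_zero_or_pos with rfl | hR
  · refine ⟨fun βh _ _ q => ?_, fun _ _ _ r => r.elim0⟩
    have hconst : (fun x => βmap (momMap Y g Icl jc kc x)) = fun _ => βmap 0 :=
      funext fun x => congrArg βmap (Subsingleton.elim _ _)
    simpa [hconst] using hη.le
  have hGL₁ : ∀ i j, ∀ y ∈ closedBall β ε₁, ‖G j i y‖ ≤ L₁ := fun i j y hy =>
    (hs i j y hy).trans (hsL₁ i j)
  have hL₁0 : 0 ≤ L₁ := (norm_nonneg _).trans (hGL₁ 0 (jc ⟨0, hR⟩) β hβball)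
  have hL₂0 : 0 ≤ L₂ := (norm_nonneg _).trans (hL₂ 0 (jc ⟨0, hR⟩) β hβball)
  have hs₀ : ∀ i j, 0 ≤ s i j := fun i j => (norm_nonneg _).trans (hs i j β hβball)
  have hres : ∀ r : Fin R,
      (#(Icl r) : ℝ)⁻¹ * ∑ i ∈ Icl r, |Y i (kc r) - g (kc r) i β| ≤ (√ε₀)⁻¹ ∧
      (#(Icl r) : ℝ)⁻¹ * ∑ i ∈ Icl r, |Y i (jc r) - g (jc r) i β| ≤ (√ε₀)⁻¹ := fun r =>
    ⟨inv_card_mul_sum_abs_le_of_one_add_mul_le _ (fun i _ => hs₀ i _) (hB2 r).1,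
      inv_card_mul_sum_abs_le_of_one_add_mul_le _ (fun i _ => hs₀ i _) (hB2 r).2⟩
  have hK := fun x (hx : ‖x - β‖ ≤ ε₀) =>
    norm_fderiv_momMap_le hG hH hGL₁ hL₂ hε₀.le hε₀₁ hL₁0 hL₂0 hres hB5 hx
  have hη' := inv_rpow_quarter_mul_le hε₀ hL₂0 hC2
  refine ⟨fun βh hβh hV q => ?_, fun vh hV hβh r => ?_⟩
  · rw [fderiv_fun_comp βh (hD _).differentiableAt (differentiable_momMap hG βh), (hD _).fderiv]
    calc _ ≤ _ := EuclideanSpace.norm_single_one_comp_apply_le _ _ q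
      _ ≤ _ := mul_le_mul (hB3 _ hV) (hK βh hβh) (norm_nonneg _) (by positivity)
      _ ≤ η := hη'
  · rw [fderiv_fun_comp vh (differentiable_momMap hG _) (hD vh).differentiableAt, (hD vh).fderiv]
    calc _ ≤ _ := EuclideanSpace.norm_single_one_comp_apply_le _ _ r
      _ ≤ _ := mul_le_mul (hK _ hβh) (hB3 _ hV) (norm_nonneg _) (by positivity)
      _ ≤ η := by rw [mul_comm]; exact hη'

theorem composed_iteration_maps_derivative_bound
    {b p R n : ℕ} (J : ℕ → Finset (Fin b))
    (β : EuclideanSpace ℝ (Fin p))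
    (ε₀ ε₁ δ₀ M₀ L₁ L₂ η : ℝ)
    (hε₀ : 0 < ε₀) (hε₀₁ : ε₀ ≤ ε₁) (hδ₀ : 0 < δ₀) (hη : 0 < η)
    -- data: responses and mean functions g j i = g_j(X_i, ·), with their first two
    -- derivatives G, H and the bounds s, L₁, L₂ of Assumption A2
    (Y : ℕ → Fin b → ℝ)
    (g : Fin b → ℕ → EuclideanSpace ℝ (Fin p) → ℝ)
    (G : Fin b → ℕ → EuclideanSpace ℝ (Fin p) → EuclideanSpace ℝ (Fin p))
    (H : Fin b → ℕ → EuclideanSpace ℝ (Fin p) →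
      (EuclideanSpace ℝ (Fin p) →L[ℝ] EuclideanSpace ℝ (Fin p)))
    (s : ℕ → Fin b → ℝ)
    (hG : ∀ j i y, HasGradientAt (g j i) (G j i y) y)
    (hH : ∀ j i y, HasFDerivAt (G j i) (H j i y) y)
    (hs : ∀ i j, ∀ x ∈ closedBall β ε₁, ‖G j i x‖ ≤ s i j)
    (hsL₁ : ∀ i j, s i j ≤ L₁)
    (hL₂ : ∀ i j, ∀ x ∈ closedBall β ε₁, ‖H j i x‖ ≤ L₂)
    -- Assumption A1: classes I(j,k,l) indexed by r, with coordinates (jc r, kc r)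
    (Icl : Fin R → Finset ℕ) (jc kc : Fin R → Fin b)
    (ridx : ℕ → Fin b → Fin b → Fin R)
    (hne : ∀ r, (Icl r).Nonempty)
    (hmem : ∀ r, ∀ i ∈ Icl r, jc r ∈ J i ∧ kc r ∈ J i)
    (hridx : ∀ i < n, ∀ j ∈ J i, ∀ k ∈ J i,
      i ∈ Icl (ridx i j k) ∧ jc (ridx i j k) = j ∧ kc (ridx i j k) = k)
    -- the GEE-solution map β(·) with its derivative D (Assumption A4)
    (βmap : EuclideanSpace ℝ (Fin R) → EuclideanSpace ℝ (Fin p))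
    (D : EuclideanSpace ℝ (Fin R) →
      (EuclideanSpace ℝ (Fin R) →L[ℝ] EuclideanSpace ℝ (Fin p)))
    (hD : ∀ v, HasFDerivAt βmap (D v) v)
    -- (B2), in both coordinate orders
    (hB2 : ∀ r : Fin R,
      ((Icl r).card : ℝ)⁻¹ *
          ∑ i ∈ Icl r, (1 + s i (jc r)) * |Y i (kc r) - g (kc r) i β| ≤ (Real.sqrt ε₀)⁻¹ ∧
      ((Icl r).card : ℝ)⁻¹ *
          ∑ i ∈ Icl r, (1 + s i (kc r)) * |Y i (jc r) - g (jc r) i β| ≤ (Real.sqrt ε₀)⁻¹)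
    -- (B3): sup_{v∈𝒱} ‖∂β/∂v‖ ≤ ε₀^{-1/4}
    (hB3 : ∀ v, inVset J ridx n δ₀ M₀ v → ‖D v‖ ≤ (ε₀ ^ ((1 : ℝ) / 4))⁻¹)
    -- (B5), in both coordinate orders
    (hB5 : ∀ (r : Fin R) (q : Fin p),
      |((Icl r).card : ℝ)⁻¹ *
          ∑ i ∈ Icl r, (G (jc r) i β) q * (Y i (kc r) - g (kc r) i β)| ≤ Real.sqrt ε₀ ∧
      |((Icl r).card : ℝ)⁻¹ *
          ∑ i ∈ Icl r, (G (kc r) i β) q * (Y i (jc r) - g (jc r) i β)| ≤ Real.sqrt ε₀)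
    -- (C2)
    (hC2 : Real.sqrt ((R : ℝ) * (max R p : ℕ)) *
      (L₁ ^ 2 * ε₀ ^ ((3 : ℝ) / 4) + (L₂ + 1) * ε₀ ^ ((1 : ℝ) / 4)) ≤ η / 2) :
    -- |(∂τ/∂β_q)|_{β=β̂}| ≤ η whenever |β̂ − β| ≤ ε₀ (with v̂ = v(β̂) ∈ 𝒱)
    (∀ βh : EuclideanSpace ℝ (Fin p), ‖βh - β‖ ≤ ε₀ →
      inVset J ridx n δ₀ M₀ (momMap Y g Icl jc kc βh) →
      ∀ q : Fin p,
        ‖fderiv ℝ (fun x => βmap (momMap Y g Icl jc kc x)) βh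
          (EuclideanSpace.single q 1)‖ ≤ η) ∧
    -- |(∂ρ/∂v_r)|_{v=v̂}| ≤ η whenever v̂ ∈ 𝒱 (with β̂ = β(v̂) satisfying |β̂ − β| ≤ ε₀)
    (∀ vh : EuclideanSpace ℝ (Fin R), inVset J ridx n δ₀ M₀ vh →
      ‖βmap vh - β‖ ≤ ε₀ →
      ∀ r : Fin R,
        ‖fderiv ℝ (fun v => momMap Y g Icl jc kc (βmap v)) vh
          (EuclideanSpace.single r 1)‖ ≤ η) :=
  composed_iteration_maps_derivative_bound_general J β ε₀ ε₁ δ₀ M₀ L₁ L₂ η hε₀ hε₀₁ hη Y g G H s hG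
    hH hs hsL₁ hL₂ Icl jc kc ridx βmap D hD hB2 hB3 hB5 hC2
end
end

section
/- Entrywise perturbation bound for the MoM estimator (core estimate of Lemma 4). Let I be a finite index set of cardinality N ≥ 1, let g_j(X_i, ·), g_k(X_i, ·) be differentiable functions of β̃ ∈ ℝ^p on the ball {|β̃ − β| ≤ ε0} with s_{ij} := sup_{|β̃−β|≤ε0} |(∂/∂β)g_j(X_i,β̃)| ≤ L1 and s_{ik} ≤ L1 for all i ∈ I, and write μ_{ij} = g_j(X_i,β), μ_{ik} = g_k(X_i,β). Suppose N^{-1} Σ_{i∈I} (1 + s_{ij}) |Y_{ik} − μ_{ik}| ≤ ε0^{-1/2} and N^{-1} Σ_{i∈I} (1 + s_{ik}) |Y_{ij} − μ_{ij}| ≤ ε0^{-1/2}. Then for any β̂ with |β̂ − β| ≤ ε0, | N^{-1} Σ_{i∈I} (Y_{ij} − g_j(X_i,β̂))(Y_{ik} − g_k(X_i,β̂)) − N^{-1} Σ_{i∈I} (Y_{ij} − μ_{ij})(Y_{ik} − μ_{ik}) | ≤ 2ε0^{1/2} + L1² ε0². -/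
/-!
With `a = Y_{ij} − μ_{ij}`, `b = Y_{ik} − μ_{ik}` and `δ_j, δ_k` the increments of `g_j, g_k`
from `β` to `β̂`, each summand changes by `−δ_j b − a δ_k + δ_j δ_k`. The mean value inequality
gives `|δ_j| ≤ s_{ij} ε₀`, so the first two terms average to at most `ε₀ · ε₀^{-1/2}` each and
the last one to at most `L₁² ε₀²`.
-/

open Metric Finset
open scoped BigOperators

theorem abs_mul_sub_mul_le_of_abs_sub_le {α : Type*} [CommRing α] [LinearOrder α]
    [IsStrictOrderedRing α]
    {a a' b b' u v : α} (ha : |a' - a| ≤ u) (hb : |b' - b| ≤ v) :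
    |a' * b' - a * b| ≤ u * |b| + v * |a| + u * v := by
  have hu : 0 ≤ u := (abs_nonneg _).trans ha
  calc |a' * b' - a * b| = |(a' - a) * b + a * (b' - b) + (a' - a) * (b' - b)| := by ring_nf
    _ ≤ |a' - a| * |b| + |a| * |b' - b| + |a' - a| * |b' - b| := by
      simp only [← abs_mul]; exact abs_add_three _ _ _
    _ ≤ u * |b| + v * |a| + u * v := by
      rw [mul_comm |a|]
      gcongr

theorem norm_sub_center_le_of_hasFDerivAt_closedBall {E F : Type*} [NormedAddCommGroup E]
    [NormedSpace ℝ E] [NormedAddCommGroup F] [NormedSpace ℝ F] {f : E → F} {f' : E → E →L[ℝ] F}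
    {x₀ x : E} {r s : ℝ} (hf : ∀ y ∈ closedBall x₀ r, HasFDerivAt f (f' y) y)
    (hs : ∀ y ∈ closedBall x₀ r, ‖f' y‖ ≤ s) (hx : x ∈ closedBall x₀ r) :
    ‖f x - f x₀‖ ≤ s * r := by
  have hx₀ : x₀ ∈ closedBall x₀ r := mem_closedBall_self (dist_nonneg.trans hx)
  have hs₀ : 0 ≤ s := (norm_nonneg _).trans (hs x₀ hx₀)
  calc ‖f x - f x₀‖ ≤ s * ‖x - x₀‖ :=
        (convex_closedBall x₀ r).norm_image_sub_le_of_norm_hasFDerivWithin_le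
          (fun y hy => (hf y hy).hasFDerivWithinAt) hs hx₀ hx
    _ ≤ s * r := by gcongr; exact mem_closedBall_iff_norm.1 hx

theorem abs_mul_sub_mul_le_of_abs_sub_le_mul {a a' b b' s t L ε : ℝ} (ha : |a' - a| ≤ s * ε)
    (hb : |b' - b| ≤ t * ε) (hs : s ≤ L) (ht : t ≤ L) (hε : 0 ≤ ε) :
    |a' * b' - a * b| ≤ ε * ((1 + s) * |b|) + ε * ((1 + t) * |a|) + L ^ 2 * ε ^ 2 := by
  have hsε : 0 ≤ s * ε := (abs_nonneg _).trans ha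
  have htε : 0 ≤ t * ε := (abs_nonneg _).trans hb
  calc |a' * b' - a * b| ≤ s * ε * |b| + t * ε * |a| + s * ε * (t * ε) :=
        abs_mul_sub_mul_le_of_abs_sub_le ha hb
    _ ≤ ε * ((1 + s) * |b|) + ε * ((1 + t) * |a|) + L * ε * (L * ε) := by
      have hb' : s * ε * |b| ≤ ε * ((1 + s) * |b|) := by nlinarith [abs_nonneg b]
      have ha' : t * ε * |a| ≤ ε * ((1 + t) * |a|) := by nlinarith [abs_nonneg a]
      have hst : s * ε * (t * ε) ≤ L * ε * (L * ε) :=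
        mul_le_mul (by gcongr) (by gcongr) htε (hsε.trans (by gcongr))
      linarith
    _ = _ := by ring

theorem Finset.expect_eq_inv_card_mul_sum {ι : Type*} (s : Finset ι) (f : ι → ℝ) :
    𝔼 i ∈ s, f i = (s.card : ℝ)⁻¹ * ∑ i ∈ s, f i := by
  rw [expect_eq_sum_div_card, div_eq_inv_mul]

theorem mom_entrywise_perturbation_bound_general
    {ι : Type*} {p : ℕ} (I : Finset ι) (hI : I.Nonempty)
    (β : EuclideanSpace ℝ (Fin p)) (ε₀ L₁ : ℝ)
    (gj gk : ι → EuclideanSpace ℝ (Fin p) → ℝ)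
    (Dj Dk : ι → EuclideanSpace ℝ (Fin p) → (EuclideanSpace ℝ (Fin p) →L[ℝ] ℝ))
    (sj sk : ι → ℝ)
    (Yj Yk : ι → ℝ)
    -- differentiability on the ball with gradient norm bounds s_{ij}, s_{ik} ≤ L₁
    (hdj : ∀ i ∈ I, ∀ x ∈ closedBall β ε₀, HasFDerivAt (gj i) (Dj i x) x)
    (hdk : ∀ i ∈ I, ∀ x ∈ closedBall β ε₀, HasFDerivAt (gk i) (Dk i x) x)
    (hsj : ∀ i ∈ I, ∀ x ∈ closedBall β ε₀, ‖Dj i x‖ ≤ sj i)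
    (hsk : ∀ i ∈ I, ∀ x ∈ closedBall β ε₀, ‖Dk i x‖ ≤ sk i)
    (hsjL : ∀ i ∈ I, sj i ≤ L₁) (hskL : ∀ i ∈ I, sk i ≤ L₁)
    -- the assumed average bounds
    (havg₁ : (I.card : ℝ)⁻¹ * ∑ i ∈ I, (1 + sj i) * |Yk i - gk i β| ≤ (Real.sqrt ε₀)⁻¹)
    (havg₂ : (I.card : ℝ)⁻¹ * ∑ i ∈ I, (1 + sk i) * |Yj i - gj i β| ≤ (Real.sqrt ε₀)⁻¹) :
    ∀ βh : EuclideanSpace ℝ (Fin p), ‖βh - β‖ ≤ ε₀ →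
      |(I.card : ℝ)⁻¹ * ∑ i ∈ I, (Yj i - gj i βh) * (Yk i - gk i βh) -
        (I.card : ℝ)⁻¹ * ∑ i ∈ I, (Yj i - gj i β) * (Yk i - gk i β)|
        ≤ 2 * Real.sqrt ε₀ + L₁ ^ 2 * ε₀ ^ 2 := by
  intro βh hβh
  have hε₀ : 0 ≤ ε₀ := (norm_nonneg _).trans hβh
  have hβh' : βh ∈ closedBall β ε₀ := mem_closedBall_iff_norm.2 hβh
  have hterm : ∀ i ∈ I,
      |(Yj i - gj i βh) * (Yk i - gk i βh) - (Yj i - gj i β) * (Yk i - gk i β)| ≤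
        ε₀ * ((1 + sj i) * |Yk i - gk i β|) + ε₀ * ((1 + sk i) * |Yj i - gj i β|) +
          L₁ ^ 2 * ε₀ ^ 2 := by
    intro i hi
    refine abs_mul_sub_mul_le_of_abs_sub_le_mul ?_ ?_ (hsjL i hi) (hskL i hi) hε₀ <;>
      rw [sub_sub_sub_cancel_left, abs_sub_comm, ← Real.norm_eq_abs]
    · exact norm_sub_center_le_of_hasFDerivAt_closedBall (hdj i hi) (hsj i hi) hβh'
    · exact norm_sub_center_le_of_hasFDerivAt_closedBall (hdk i hi) (hsk i hi) hβh'
  simp only [← expect_eq_inv_card_mul_sum] at havg₁ havg₂ ⊢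
  calc _ ≤ 𝔼 i ∈ I,
        |(Yj i - gj i βh) * (Yk i - gk i βh) - (Yj i - gj i β) * (Yk i - gk i β)| := by
        rw [← expect_sub_distrib]; exact abs_expect_le _ _
    _ ≤ 𝔼 i ∈ I, (ε₀ * ((1 + sj i) * |Yk i - gk i β|) +
          ε₀ * ((1 + sk i) * |Yj i - gj i β|) + L₁ ^ 2 * ε₀ ^ 2) := expect_le_expect hterm
    _ = ε₀ * 𝔼 i ∈ I, (1 + sj i) * |Yk i - gk i β| +
          ε₀ * 𝔼 i ∈ I, (1 + sk i) * |Yj i - gj i β| + L₁ ^ 2 * ε₀ ^ 2 := by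
        rw [expect_add_distrib, expect_add_distrib, mul_expect, mul_expect, expect_const hI]
    _ ≤ ε₀ * (Real.sqrt ε₀)⁻¹ + ε₀ * (Real.sqrt ε₀)⁻¹ + L₁ ^ 2 * ε₀ ^ 2 := by gcongr
    _ = 2 * Real.sqrt ε₀ + L₁ ^ 2 * ε₀ ^ 2 := by rw [← div_eq_mul_inv, Real.div_sqrt]; ring

theorem mom_entrywise_perturbation_bound
    {ι : Type*} {p : ℕ} (I : Finset ι) (hI : I.Nonempty)
    (β : EuclideanSpace ℝ (Fin p)) (ε₀ L₁ : ℝ) (hε₀ : 0 < ε₀)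
    (gj gk : ι → EuclideanSpace ℝ (Fin p) → ℝ)
    (Dj Dk : ι → EuclideanSpace ℝ (Fin p) → (EuclideanSpace ℝ (Fin p) →L[ℝ] ℝ))
    (sj sk : ι → ℝ)
    (Yj Yk : ι → ℝ)
    -- differentiability on the ball with gradient norm bounds s_{ij}, s_{ik} ≤ L₁
    (hdj : ∀ i ∈ I, ∀ x ∈ closedBall β ε₀, HasFDerivAt (gj i) (Dj i x) x)
    (hdk : ∀ i ∈ I, ∀ x ∈ closedBall β ε₀, HasFDerivAt (gk i) (Dk i x) x)
    (hsj : ∀ i ∈ I, ∀ x ∈ closedBall β ε₀, ‖Dj i x‖ ≤ sj i)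
    (hsk : ∀ i ∈ I, ∀ x ∈ closedBall β ε₀, ‖Dk i x‖ ≤ sk i)
    (hsjL : ∀ i ∈ I, sj i ≤ L₁) (hskL : ∀ i ∈ I, sk i ≤ L₁)
    -- the assumed average bounds
    (havg₁ : (I.card : ℝ)⁻¹ * ∑ i ∈ I, (1 + sj i) * |Yk i - gk i β| ≤ (Real.sqrt ε₀)⁻¹)
    (havg₂ : (I.card : ℝ)⁻¹ * ∑ i ∈ I, (1 + sk i) * |Yj i - gj i β| ≤ (Real.sqrt ε₀)⁻¹) :
    ∀ βh : EuclideanSpace ℝ (Fin p), ‖βh - β‖ ≤ ε₀ →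
      |(I.card : ℝ)⁻¹ * ∑ i ∈ I, (Yj i - gj i βh) * (Yk i - gk i βh) -
        (I.card : ℝ)⁻¹ * ∑ i ∈ I, (Yj i - gj i β) * (Yk i - gk i β)|
        ≤ 2 * Real.sqrt ε₀ + L₁ ^ 2 * ε₀ ^ 2 :=
  mom_entrywise_perturbation_bound_general I hI β ε₀ L₁ gj gk Dj Dk sj sk Yj Yk hdj hdk hsj hsk hsjL
    hskL havg₁ havg₂
end
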